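/- arXiv:1607.07364 — 2 statements merged into one kernel-verified Lean document; each statement's English description precedes it below -/
import Mathlib

section
/- If a graph G^s is obtained from G by applying m successive double-subdivisions of edges (each step subdivides one edge twice), then G has a vertex cover of size k if and only if G^s has a vertex cover of size k+m. -/
/-- `C` is a vertex cover of `G`: every edge has an endpoint in `C`. -/
def IsVertexCover {V : Type*} (G : SimpleGraph V) (C : Finset V) : Prop :=
  ∀ ⦃a b : V⦄, G.Adj a b → a ∈ C ∨ b ∈ C

/-- `G'` is obtained from `G` (a graph on the countable vertex set `ℕ`) by
subdividing one edge `uv` twice: the edge `uv` is deleted and two fresh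
vertices `x, y` are added together with the edges `ux`, `xy`, `yv`. -/
def IsDoubleSubdivision (G G' : SimpleGraph ℕ) : Prop :=
  ∃ u v x y : ℕ, G.Adj u v ∧ x ≠ y ∧ x ∉ G.support ∧ y ∉ G.support ∧
    G' = SimpleGraph.fromEdgeSet
      ((G.edgeSet \ {s(u, v)}) ∪ {s(u, x), s(x, y), s(y, v)})

/-!
Each double subdivision raises the minimum vertex cover size by exactly one. A cover of `G` extends
to the subdivided graph by one of the new vertices `x`, `y` (the one not adjacent to the endpoint of
`uv` already in the cover). Conversely a cover of the subdivided graph contains `x` or `y`, since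
`xy` is an edge; deleting both leaves every old edge but `uv` covered, and `u` has to be added back
only when neither `u` nor `v` was in the cover, in which case both `x` and `y` were.
-/

open Finset

variable {V : Type*}

namespace SimpleGraph

def doubleSubdivide (G : SimpleGraph V) (u v x y : V) : SimpleGraph V :=
  fromEdgeSet ((G.edgeSet \ {s(u, v)}) ∪ {s(u, x), s(x, y), s(y, v)})

lemma Adj.ne_of_notMem_support {G : SimpleGraph V} {a b x : V} (hab : G.Adj a b)
    (hx : x ∉ G.support) : a ≠ x :=
  fun h => hx (h ▸ G.mem_support.2 ⟨b, hab⟩)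

end SimpleGraph

lemma isVertexCover_fromEdgeSet_iff {E : Set (Sym2 V)} {C : Finset V} :
    IsVertexCover (SimpleGraph.fromEdgeSet E) C ↔ ∀ ⦃a b⦄, s(a, b) ∈ E → a ≠ b → a ∈ C ∨ b ∈ C := by
  simp only [IsVertexCover, SimpleGraph.fromEdgeSet_adj, and_imp]

lemma isVertexCover_doubleSubdivide_iff {G : SimpleGraph V} {u v x y : V} {C : Finset V}
    (hux : u ≠ x) (hxy : x ≠ y) (hyv : y ≠ v) :
    IsVertexCover (G.doubleSubdivide u v x y) C ↔
      (∀ ⦃a b⦄, G.Adj a b → s(a, b) ≠ s(u, v) → a ∈ C ∨ b ∈ C) ∧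
        (u ∈ C ∨ x ∈ C) ∧ (x ∈ C ∨ y ∈ C) ∧ (y ∈ C ∨ v ∈ C) := by
  rw [SimpleGraph.doubleSubdivide, isVertexCover_fromEdgeSet_iff]
  constructor
  · intro hC
    refine ⟨fun a b hab hne => hC (by simp [hab, hne]) hab.ne,
      hC (by simp) hux, hC (by simp) hxy, hC (by simp) hyv⟩
  · rintro ⟨hrest, hcux, hcxy, hcyv⟩ a b hab -
    simp only [Set.mem_union, Set.mem_sdiff, SimpleGraph.mem_edgeSet, Set.mem_singleton_iff,
      Set.mem_insert_iff] at hab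
    rcases hab with ⟨hab, hne⟩ | h | h | h
    · exact hrest hab hne
    all_goals rcases Sym2.eq_iff.1 h with ⟨rfl, rfl⟩ | ⟨rfl, rfl⟩ <;> tauto

lemma IsVertexCover.exists_doubleSubdivide [DecidableEq V] {G : SimpleGraph V} {u v x y : V}
    {C : Finset V} (hC : IsVertexCover G C) (huv : G.Adj u v) (hux : u ≠ x) (hxy : x ≠ y)
    (hyv : y ≠ v) :
    ∃ C' : Finset V, IsVertexCover (G.doubleSubdivide u v x y) C' ∧ #C' ≤ #C + 1 := by
  have hrest {D : Finset V} (hD : C ⊆ D) :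
      ∀ ⦃a b⦄, G.Adj a b → s(a, b) ≠ s(u, v) → a ∈ D ∨ b ∈ D :=
    fun a b hab _ => (hC hab).imp (@hD a) (@hD b)
  rcases hC huv with hu | hv
  · refine ⟨insert y C, ?_, card_insert_le y C⟩
    rw [isVertexCover_doubleSubdivide_iff hux hxy hyv]
    exact ⟨hrest (subset_insert y C), .inl (mem_insert_of_mem hu), .inr (mem_insert_self y C),
      .inl (mem_insert_self y C)⟩
  · refine ⟨insert x C, ?_, card_insert_le x C⟩
    rw [isVertexCover_doubleSubdivide_iff hux hxy hyv]
    exact ⟨hrest (subset_insert x C), .inr (mem_insert_self x C), .inl (mem_insert_self x C),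
      .inr (mem_insert_of_mem hv)⟩

lemma IsVertexCover.exists_of_doubleSubdivide [DecidableEq V] {G : SimpleGraph V}
    {u v x y : V} {C : Finset V} (hC : IsVertexCover (G.doubleSubdivide u v x y) C)
    (huv : G.Adj u v) (hxy : x ≠ y) (hx : x ∉ G.support) (hy : y ∉ G.support) :
    ∃ D : Finset V, IsVertexCover G D ∧ #D + 1 ≤ #C := by
  have hux : u ≠ x := huv.ne_of_notMem_support hx
  have hyv : y ≠ v := (huv.symm.ne_of_notMem_support hy).symm
  obtain ⟨hrest, hcux, hcxy, hcyv⟩ := (isVertexCover_doubleSubdivide_iff hux hxy hyv).1 hC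
  set D := C \ {x, y}
  have mem_D {a b : V} (hab : G.Adj a b) (ha : a ∈ C) : a ∈ D := by
    simp only [D, mem_sdiff, mem_insert, mem_singleton, not_or]
    exact ⟨ha, hab.ne_of_notMem_support hx, hab.ne_of_notMem_support hy⟩
  have hD : ∀ ⦃a b⦄, G.Adj a b → s(a, b) ≠ s(u, v) → a ∈ D ∨ b ∈ D := fun a b hab hne =>
    (hrest hab hne).imp (mem_D hab) (mem_D hab.symm)
  by_cases hcuv : u ∈ C ∨ v ∈ C
  · refine ⟨D, fun a b hab => ?_, ?_⟩
    · by_cases hne : s(a, b) = s(u, v)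
      · rcases Sym2.eq_iff.1 hne with ⟨rfl, rfl⟩ | ⟨rfl, rfl⟩
        · exact hcuv.imp (mem_D hab) (mem_D hab.symm)
        · exact hcuv.symm.imp (mem_D hab) (mem_D hab.symm)
      · exact hD hab hne
    · have hDC : D ⊂ C := (ssubset_iff_of_subset sdiff_subset).2 <| by
        rcases hcxy with hxC | hyC
        · exact ⟨x, hxC, by simp⟩
        · exact ⟨y, hyC, by simp⟩
      exact card_lt_card hDC
  · have hxC : x ∈ C := hcux.resolve_left fun hu => hcuv (.inl hu)
    have hyC : y ∈ C := hcyv.resolve_right fun hv => hcuv (.inr hv)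
    refine ⟨insert u D, fun a b hab => ?_, ?_⟩
    · by_cases hne : s(a, b) = s(u, v)
      · rcases Sym2.eq_iff.1 hne with ⟨rfl, rfl⟩ | ⟨rfl, rfl⟩
        · exact .inl (mem_insert_self a D)
        · exact .inr (mem_insert_self b D)
      · exact (hD hab hne).imp mem_insert_of_mem mem_insert_of_mem
    · have hxyC : {x, y} ⊆ C := insert_subset hxC (singleton_subset_iff.2 hyC)
      have hcard : #D = #C - #{x, y} := card_sdiff_of_subset hxyC
      have h2 := card_le_card hxyC
      rw [card_pair hxy] at hcard h2
      have := card_insert_le u D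
      omega

lemma IsDoubleSubdivision.exists_isVertexCover_iff {G G' : SimpleGraph ℕ}
    (h : IsDoubleSubdivision G G') (k : ℕ) :
    (∃ C : Finset ℕ, IsVertexCover G C ∧ #C ≤ k) ↔
      ∃ C : Finset ℕ, IsVertexCover G' C ∧ #C ≤ k + 1 := by
  obtain ⟨u, v, x, y, huv, hxy, hx, hy, rfl⟩ := h
  constructor
  · rintro ⟨C, hC, hCk⟩
    obtain ⟨C', hC', hcard⟩ := hC.exists_doubleSubdivide huv
      (huv.ne_of_notMem_support hx) hxy (huv.symm.ne_of_notMem_support hy).symm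
    exact ⟨C', hC', by omega⟩
  · rintro ⟨C, hC, hCk⟩
    obtain ⟨D, hD, hcard⟩ := hC.exists_of_doubleSubdivide huv hxy hx hy
    exact ⟨D, hD, by omega⟩

theorem stmt1 (m k : ℕ) (f : Fin (m + 1) → SimpleGraph ℕ)
    (hstep : ∀ i : Fin m, IsDoubleSubdivision (f i.castSucc) (f i.succ))
    (G Gs : SimpleGraph ℕ) (hG : f 0 = G) (hGs : f (Fin.last m) = Gs) :
    (∃ C : Finset ℕ, IsVertexCover G C ∧ C.card ≤ k) ↔
      (∃ C : Finset ℕ, IsVertexCover Gs C ∧ C.card ≤ k + m) := by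
  subst hG hGs
  induction m with
  | zero => rfl
  | succ m ih =>
    have hinit := ih (fun i => f i.castSucc)
      (fun i => by simpa only [Fin.succ_castSucc] using hstep i.castSucc)
    have hlast := (hstep (Fin.last m)).exists_isVertexCover_iff (k + m)
    rw [Fin.succ_last] at hlast
    exact hinit.trans hlast
end

section
/- Suppose a guarding instance has vertex gadgets V and edge gadgets E(G) for a graph G, and every valid guard placement satisfies: (1) each vertex gadget contains at least one guard; (2) each edge gadget's witness point is guarded only by a guard in an outer box of one of its endpoints; (3) a vertex gadget with exactly one guard has that guard in its middle box (not an outer box). Then any valid placement with n + k guards (n = |V(G)|) yields a vertex cover of G of size at most k. -/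
/-- Abstract reverse direction of the gadget argument: guards are elements of
a finite set `Gu`; each guard sits in the gadget of a vertex (`vert`), either
in an outer box (`isOuter`) or in the middle box.  Hypotheses:
(1) every vertex gadget contains at least one guard;
(2) for each edge, some guard in an outer box of an endpoint's gadget guards
    the edge gadget's witness point;
(3) a vertex gadget whose only guard is in an outer box does not occur, i.e.
    any outer-box guard is accompanied by a second guard at the same vertex.
Then a valid placement with `n + k` guards (`n = |V(G)|`) yields a vertex
cover of `G` of size at most `k`. -/
theorem stmt17 {V ι : Type*} [Fintype V] [DecidableEq V] [DecidableEq ι]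
    (G : SimpleGraph V) (Gu : Finset ι) (vert : ι → V) (isOuter : ι → Prop)
    (h1 : ∀ v : V, ∃ g ∈ Gu, vert g = v)
    (h2 : ∀ ⦃a b : V⦄, G.Adj a b →
      ∃ g ∈ Gu, (vert g = a ∨ vert g = b) ∧ isOuter g)
    (h3 : ∀ g ∈ Gu, isOuter g → ∃ g' ∈ Gu, g' ≠ g ∧ vert g' = vert g)
    (k : ℕ) (hcard : Gu.card = Fintype.card V + k) :
    ∃ C : Finset V, IsVertexCover G C ∧ C.card ≤ k := by
  classical
  set f : V → Finset ι := fun v => Gu.filter (fun g => vert g = v) with hf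
  set C : Finset V := Finset.univ.filter (fun v => 2 ≤ (f v).card) with hC
  have hfib : ∀ v, v ∈ Finset.univ → 1 ≤ (f v).card := by
    intro v _
    obtain ⟨g, hg, hv⟩ := h1 v
    have : g ∈ f v := Finset.mem_filter.mpr ⟨hg, hv⟩
    exact Finset.card_pos.mpr ⟨g, this⟩
  have hsum : ∑ v : V, (f v).card = Gu.card := by
    rw [hf]
    exact (Finset.card_eq_sum_card_fiberwise (fun g _ => Finset.mem_univ (vert g))).symm
  -- two guards at vertex of an outer guard
  have houter : ∀ g ∈ Gu, isOuter g → vert g ∈ C := by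
    intro g hg ho
    obtain ⟨g', hg', hne, hv⟩ := h3 g hg ho
    refine Finset.mem_filter.mpr ⟨Finset.mem_univ _, ?_⟩
    have h2le : ({g', g} : Finset ι).card ≤ (f (vert g)).card := by
      apply Finset.card_le_card
      intro x hx
      rcases Finset.mem_insert.mp hx with h | h
      · subst h; exact Finset.mem_filter.mpr ⟨hg', hv⟩
      · rw [Finset.mem_singleton] at h; subst h
        exact Finset.mem_filter.mpr ⟨hg, rfl⟩
    rwa [Finset.card_insert_of_notMem (by simpa using hne), Finset.card_singleton] at h2le
  refine ⟨C, ?_, ?_⟩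
  · intro a b hab
    obtain ⟨g, hg, hv, ho⟩ := h2 hab
    rcases hv with h | h
    · left; rw [← h]; exact houter g hg ho
    · right; rw [← h]; exact houter g hg ho
  · have hsplit : ∑ v : V, (f v).card =
        ∑ v ∈ C, (f v).card + ∑ v ∈ Finset.univ \ C, (f v).card := by
      rw [← Finset.sum_union (Finset.disjoint_sdiff)]
      congr 1
      rw [Finset.union_sdiff_of_subset (Finset.subset_univ C)]
    have h2C : 2 * C.card ≤ ∑ v ∈ C, (f v).card := by
      rw [Finset.card_eq_sum_ones C, Finset.mul_sum]
      apply Finset.sum_le_sum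
      intro v hv
      simpa using (Finset.mem_filter.mp hv).2
    have h1R : (Finset.univ \ C).card ≤ ∑ v ∈ Finset.univ \ C, (f v).card := by
      rw [Finset.card_eq_sum_ones]
      exact Finset.sum_le_sum (fun v hv => hfib v (Finset.mem_univ v))
    have hcC : C.card ≤ Fintype.card V := by
      simpa using Finset.card_le_card (Finset.subset_univ C)
    have hsd : (Finset.univ \ C).card = Fintype.card V - C.card := by
      rw [Finset.card_sdiff_of_subset (Finset.subset_univ C), Finset.card_univ]
    rw [hcard] at hsum
    omega
end
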